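/- Let K ⊆ ℂ × ℂ^* be an O(ℂ×ℂ^*)-convex compact set whose projection π₁(K) is contained in a closed disc D ⊆ ℂ, let z₀ ∈ ℂ \ D, and let S = {(z₀, e^{2πit}) : t ∈ [0,1]} be the unit circle over z₀; then K ∪ S is O(ℂ×ℂ^*)-convex and compact. -/

import Mathlib

open Set

/-- The holomorphic hull of `K` with respect to the holomorphic functions on the open set
`U ⊆ ℂ × ℂ`. -/
def holoHullIn (U K : Set (ℂ × ℂ)) : Set (ℂ × ℂ) :=
  {x ∈ U | ∀ f : ℂ × ℂ → ℂ, DifferentiableOn ℂ f U →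
    ∀ c : ℝ, (∀ y ∈ K, ‖f y‖ ≤ c) → ‖f x‖ ≤ c}

/-- If `K ⊆ ℂ × ℂ*` is an `O(ℂ×ℂ*)`-convex compact set whose first projection lies in a closed
disc `D`, `z₀ ∉ D`, and `S` is the unit circle over `z₀`, then `K ∪ S` is `O(ℂ×ℂ*)`-convex and
compact. -/
theorem stmt6 (K : Set (ℂ × ℂ)) (hKsub : K ⊆ {p : ℂ × ℂ | p.2 ≠ 0})
    (hKc : IsCompact K) (hKconv : holoHullIn {p : ℂ × ℂ | p.2 ≠ 0} K = K)
    (c : ℂ) (r : ℝ) (D : Set ℂ) (hD : D = Metric.closedBall c r)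
    (hproj : (fun p : ℂ × ℂ => p.1) '' K ⊆ D)
    (z₀ : ℂ) (hz₀ : z₀ ∉ D)
    (S : Set (ℂ × ℂ))
    (hS : S = (fun t : ℝ => ((z₀, Complex.exp (2 * Real.pi * t * Complex.I)) : ℂ × ℂ)) ''
      Icc (0:ℝ) 1) :
    holoHullIn {p : ℂ × ℂ | p.2 ≠ 0} (K ∪ S) = K ∪ S ∧ IsCompact (K ∪ S) := by
  have hSU : S ⊆ {p : ℂ × ℂ | p.2 ≠ 0} := by
    rw [hS]; rintro _ ⟨t, _, rfl⟩
    exact Complex.exp_ne_zero _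
  have hScomp : IsCompact S := by
    rw [hS]
    exact isCompact_Icc.image (by fun_prop)
  have hS1 : ∀ y ∈ S, y.1 = z₀ ∧ ‖y.2‖ = 1 := by
    rw [hS]; rintro _ ⟨t, _, rfl⟩
    refine ⟨rfl, ?_⟩
    dsimp only
    rw [show (2 * (Real.pi:ℂ) * (t:ℂ) * Complex.I) = ((2*Real.pi*t : ℝ):ℂ) * Complex.I by
      push_cast; ring, Complex.norm_exp_ofReal_mul_I]
  have hS2 : ∀ w : ℂ, ‖w‖ = 1 → (z₀, w) ∈ S := by
    intro w hw
    have hexp : Complex.exp (Complex.arg w * Complex.I) = w := by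
      have h := Complex.norm_mul_exp_arg_mul_I w
      rw [hw] at h
      simpa using h
    have hπ : (0:ℝ) < 2 * Real.pi := by positivity
    have harg1 := Complex.arg_le_pi w
    have harg2 := Complex.neg_pi_lt_arg w
    have hπ' : (Real.pi:ℂ) ≠ 0 := by
      exact_mod_cast Real.pi_ne_zero
    rw [hS]
    by_cases h0 : 0 ≤ Complex.arg w
    · refine ⟨Complex.arg w / (2 * Real.pi), ⟨by positivity, ?_⟩, ?_⟩
      · rw [div_le_one hπ]
        nlinarith [Real.pi_pos]
      · have key : (2 * (Real.pi:ℂ) * ((Complex.arg w / (2 * Real.pi) : ℝ):ℂ) * Complex.I)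
            = (Complex.arg w : ℂ) * Complex.I := by
          push_cast
          field_simp
        simp only [key, hexp]
    · refine ⟨Complex.arg w / (2 * Real.pi) + 1, ⟨?_, ?_⟩, ?_⟩
      · have : -(1/2 : ℝ) < Complex.arg w / (2 * Real.pi) := by
          rw [lt_div_iff₀ hπ]
          nlinarith [Real.pi_pos]
        linarith
      · have : Complex.arg w / (2 * Real.pi) ≤ 0 := by
          apply div_nonpos_of_nonpos_of_nonneg (by linarith) hπ.le
        linarith
      · have key : (2 * (Real.pi:ℂ) * ((Complex.arg w / (2 * Real.pi) + 1 : ℝ):ℂ) * Complex.I)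
            = (Complex.arg w : ℂ) * Complex.I + 2 * (Real.pi:ℂ) * Complex.I := by
          push_cast
          field_simp
        simp only [key, Complex.exp_add, Complex.exp_two_pi_mul_I, mul_one, hexp]
  have hKD : ∀ p ∈ K, dist p.1 c ≤ r := by
    intro p hp
    have := hproj ⟨p, hp, rfl⟩
    rw [hD] at this
    simpa [Metric.mem_closedBall] using this
  have hz₀r : r < dist z₀ c := by
    rw [hD] at hz₀
    simpa [Metric.mem_closedBall, not_le] using hz₀
  refine ⟨?_, hKc.union hScomp⟩
  apply Subset.antisymm
  · intro x hx
    obtain ⟨hxU, hxf⟩ := hx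
    have hx2 : x.2 ≠ 0 := hxU
    by_cases hr : r < 0
    -- Branch A : the disc is empty, hence K = ∅
    · have hKe : ∀ p ∈ K, False := fun p hp => by
        have := hKD p hp; have := dist_nonneg (x := p.1) (y := c); linarith
      have hbS : ∀ (f : ℂ × ℂ → ℂ) (b : ℝ), (∀ y ∈ S, ‖f y‖ ≤ b) →
          (∀ y ∈ K ∪ S, ‖f y‖ ≤ b) := by
        intro f b hb y hy
        rcases hy with hy | hy
        · exact absurd hy (hKe y)
        · exact hb y hy
      have hx1 : x.1 = z₀ := by
        have h := hxf (fun p => p.1 - z₀) (by fun_prop) 0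
          (hbS _ _ (fun y hy => by simp [(hS1 y hy).1]))
        simpa [sub_eq_zero] using le_antisymm h (norm_nonneg _)
      have hx2n : ‖x.2‖ = 1 := by
        have hA : ‖x.2‖ ≤ 1 := hxf (fun p => p.2) (by fun_prop) 1
          (hbS _ _ (fun y hy => (hS1 y hy).2.le))
        have hB : ‖x.2‖⁻¹ ≤ 1 := by
          have := hxf (fun p => (p.2)⁻¹)
            (fun p hp => (differentiableAt_snd.inv hp).differentiableWithinAt) 1
            (hbS _ _ (fun y hy => by rw [norm_inv, (hS1 y hy).2]; norm_num))
          simpa [norm_inv] using this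
        have hpos : 0 < ‖x.2‖ := norm_pos_iff.2 hx2
        have := (inv_le_one₀ hpos).1 hB
        linarith
      right
      have := hS2 x.2 hx2n
      rwa [← hx1, Prod.mk.eta] at this
    -- Branch B : 0 ≤ r
    · push_neg at hr
      have hqgen : ∀ ζ : ℂ, r < dist ζ c → ∀ w : ℂ, dist w c ≤ r →
          ‖(w - c) * (ζ - c)⁻¹‖ ≤ r / dist ζ c := by
        intro ζ hζ w hw
        have hdc : 0 < dist ζ c := lt_of_le_of_lt hr hζ
        rw [norm_mul, norm_inv, ← dist_eq_norm, ← dist_eq_norm, ← div_eq_mul_inv]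
        gcongr
      have hdcz : 0 < dist z₀ c := lt_of_le_of_lt hr hz₀r
      have hzc : z₀ - c ≠ 0 := sub_ne_zero.2 (dist_pos.1 hdcz)
      set d : ℂ := (z₀ - c)⁻¹ with hd
      set θ : ℝ := r / dist z₀ c with hθ
      have hθ0 : 0 ≤ θ := div_nonneg hr hdcz.le
      have hθ1 : θ < 1 := (div_lt_one hdcz).2 hz₀r
      have hqz : (z₀ - c) * d = 1 := mul_inv_cancel₀ hzc
      have hq : ∀ w : ℂ, dist w c ≤ r → ‖(w - c) * d‖ ≤ θ := fun w hw =>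
        hqgen z₀ hz₀r w hw
      by_cases h1 : x.1 = z₀
      -- Case 3 : x lies over z₀ ; show it is on the circle
      · obtain ⟨B₁, hB₁⟩ := hKc.exists_bound_of_continuousOn (f := fun p : ℂ × ℂ => p.2)
          continuous_snd.continuousOn
        obtain ⟨B₂, hB₂⟩ := hKc.exists_bound_of_continuousOn (f := fun p : ℂ × ℂ => (p.2)⁻¹)
          (continuous_snd.continuousOn.inv₀ (fun p hp => hKsub hp))
        set B : ℝ := max (max B₁ B₂) 0 + 1 with hB
        have hB0 : 0 < B := by positivity
        have main : ∀ g : ℂ × ℂ → ℂ, DifferentiableOn ℂ g {p : ℂ × ℂ | p.2 ≠ 0} →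
            (∀ y ∈ K, ‖g y‖ ≤ B) → (∀ y ∈ S, ‖g y‖ = 1) → ¬ (1 < ‖g x‖) := by
          intro g hg hgK hgS hgx
          set v : ℝ := ‖g x‖ with hv
          obtain ⟨n, hn⟩ := exists_pow_lt_of_lt_one
            (div_pos (lt_trans one_pos hgx) hB0) hθ1
          have hBθ : B * θ ^ n < v := by
            have := (lt_div_iff₀ hB0).1 hn
            linarith [this]
          have happ := hxf (fun p => g p * ((p.1 - c) * d) ^ n)
            (hg.mul (by fun_prop)) (max (B * θ ^ n) 1) ?_
          · have happ' : ‖g x * ((x.1 - c) * d) ^ n‖ ≤ max (B * θ ^ n) 1 := happ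
            rw [h1, hqz, one_pow, mul_one] at happ'
            have hlt : max (B * θ ^ n) 1 < v := max_lt hBθ hgx
            rw [← hv] at happ'
            linarith
          · intro y hy
            rcases hy with hy | hy
            · rw [norm_mul, norm_pow]
              have h2 : ‖(y.1 - c) * d‖ ^ n ≤ θ ^ n :=
                pow_le_pow_left₀ (norm_nonneg _) (hq _ (hKD y hy)) n
              calc ‖g y‖ * ‖(y.1 - c) * d‖ ^ n ≤ B * θ ^ n :=
                    mul_le_mul (hgK y hy) h2 (pow_nonneg (norm_nonneg _) n) hB0.le
                _ ≤ max (B * θ ^ n) 1 := le_max_left _ _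
            · rw [(hS1 y hy).1, hqz, one_pow, mul_one, hgS y hy]
              exact le_max_right _ _
        have hmax : ∀ a, a ≤ max (max B₁ B₂) 0 → a ≤ B := by
          intro a ha; rw [hB]; linarith
        have hA : ¬ (1 < ‖x.2‖) := main (fun p => p.2) (by fun_prop)
          (fun y hy => hmax _ ((hB₁ y hy).trans ((le_max_left B₁ B₂).trans (le_max_left _ _))))
          (fun y hy => (hS1 y hy).2)
        have hBv : ¬ (1 < ‖x.2‖⁻¹) := by
          have := main (fun p => (p.2)⁻¹)
            (fun p hp => (differentiableAt_snd.inv hp).differentiableWithinAt)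
            (fun y hy => hmax _ ((hB₂ y hy).trans ((le_max_right B₁ B₂).trans (le_max_left _ _))))
            (fun y hy => by rw [norm_inv, (hS1 y hy).2]; norm_num)
          simpa [norm_inv] using this
        push_neg at hA hBv
        have hpos : 0 < ‖x.2‖ := norm_pos_iff.2 hx2
        have h1' : 1 ≤ ‖x.2‖ := (inv_le_one₀ hpos).1 hBv
        have hx2n : ‖x.2‖ = 1 := le_antisymm hA h1'
        right
        have := hS2 x.2 hx2n
        rwa [← h1, Prod.mk.eta] at this
      · by_cases h2 : x.1 ∈ D
        -- Case 2 : x lies over the disc ; show x ∈ K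
        · rcases K.eq_empty_or_nonempty with hKe | ⟨p₀, hp₀⟩
          · exfalso
            have h := hxf (fun p => p.1 - z₀) (by fun_prop) 0 ?_
            · exact h1 (by simpa [sub_eq_zero] using le_antisymm h (norm_nonneg _))
            · intro y hy
              rcases hy with hy | hy
              · rw [hKe] at hy; exact absurd hy (notMem_empty y)
              · simp [(hS1 y hy).1]
          · left
            rw [← hKconv]
            refine ⟨hxU, ?_⟩
            intro f hf b hb
            have hb0 : 0 ≤ b := le_trans (norm_nonneg _) (hb p₀ hp₀)
            have hxD : dist x.1 c ≤ r := by
              rw [hD] at h2; simpa [Metric.mem_closedBall] using h2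
            have key : ∀ n : ℕ, ‖f x‖ * (1 - θ ^ n) ≤ b * (1 + θ ^ n) := by
              intro n
              have happ := hxf (fun p => f p * (1 - ((p.1 - c) * d) ^ n))
                (hf.mul (by fun_prop)) (b * (1 + θ ^ n)) ?_
              · have hxq : ‖((x.1 - c) * d) ^ n‖ ≤ θ ^ n := by
                  rw [norm_pow]
                  exact pow_le_pow_left₀ (norm_nonneg _) (hq _ hxD) n
                have hlow : 1 - θ ^ n ≤ ‖1 - ((x.1 - c) * d) ^ n‖ := by
                  have := norm_sub_norm_le (1 : ℂ) (((x.1 - c) * d) ^ n)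
                  rw [norm_one] at this
                  linarith
                calc ‖f x‖ * (1 - θ ^ n) ≤ ‖f x‖ * ‖1 - ((x.1 - c) * d) ^ n‖ :=
                      mul_le_mul_of_nonneg_left hlow (norm_nonneg _)
                  _ = ‖f x * (1 - ((x.1 - c) * d) ^ n)‖ := (norm_mul _ _).symm
                  _ ≤ b * (1 + θ ^ n) := happ
              · intro y hy
                rcases hy with hy | hy
                · rw [norm_mul]
                  have hyq : ‖((y.1 - c) * d) ^ n‖ ≤ θ ^ n := by
                    rw [norm_pow]
                    exact pow_le_pow_left₀ (norm_nonneg _) (hq _ (hKD y hy)) n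
                  have hup : ‖1 - ((y.1 - c) * d) ^ n‖ ≤ 1 + θ ^ n := by
                    have := norm_sub_le (1 : ℂ) (((y.1 - c) * d) ^ n)
                    rw [norm_one] at this
                    linarith
                  exact mul_le_mul (hb y hy) hup (norm_nonneg _) hb0
                · rw [(hS1 y hy).1, hqz, one_pow, sub_self, mul_zero, norm_zero]
                  positivity
            by_contra hgt
            push_neg at hgt
            set a : ℝ := ‖f x‖ with ha
            have hab : 0 < a + b := by
              have : 0 ≤ a := norm_nonneg _
              linarith
            obtain ⟨n, hn⟩ := exists_pow_lt_of_lt_one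
              (show 0 < (a - b) / (a + b) by apply div_pos <;> linarith) hθ1
            have h5 : θ ^ n * (a + b) < a - b := (lt_div_iff₀ hab).1 hn
            have h6 := key n
            nlinarith [h6, h5]
        -- Case 1 : x.1 outside the disc and ≠ z₀ : contradiction
        · exfalso
          have hxc : r < dist x.1 c := by
            rw [hD] at h2; simpa [Metric.mem_closedBall, not_le] using h2
          have hdcx : 0 < dist x.1 c := lt_of_le_of_lt hr hxc
          have hxcne : x.1 - c ≠ 0 := sub_ne_zero.2 (dist_pos.1 hdcx)
          set d₁ : ℂ := (x.1 - c)⁻¹ with hd₁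
          set θ₁ : ℝ := r / dist x.1 c with hθ₁
          have hθ₁0 : 0 ≤ θ₁ := div_nonneg hr hdcx.le
          have hθ₁1 : θ₁ < 1 := (div_lt_one hdcx).2 hxc
          have hq₁ : ∀ w : ℂ, dist w c ≤ r → ‖(w - c) * d₁‖ ≤ θ₁ := fun w hw =>
            hqgen x.1 hxc w hw
          have hqx : (x.1 - c) * d₁ = 1 := mul_inv_cancel₀ hxcne
          set M : ℝ := r + dist c z₀ with hM
          have hM0 : 0 ≤ M := by
            have := dist_nonneg (x := c) (y := z₀); linarith
          have hMb : ∀ w : ℂ, dist w c ≤ r → ‖w - z₀‖ ≤ M := by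
            intro w hw
            rw [← dist_eq_norm]
            calc dist w z₀ ≤ dist w c + dist c z₀ := dist_triangle _ _ _
              _ ≤ M := by rw [hM]; linarith
          set v : ℝ := ‖x.1 - z₀‖ with hv
          have hv0 : 0 < v := norm_pos_iff.2 (sub_ne_zero.2 h1)
          obtain ⟨n, hn⟩ := exists_pow_lt_of_lt_one
            (show 0 < v / (M + 1) by apply div_pos <;> linarith) hθ₁1
          have hMn : M * θ₁ ^ n < v := by
            have h5 : θ₁ ^ n * (M + 1) < v := (lt_div_iff₀ (by linarith)).1 hn
            nlinarith [pow_nonneg hθ₁0 n]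
          have happ := hxf (fun p => (p.1 - z₀) * ((p.1 - c) * d₁) ^ n)
            (by fun_prop) (M * θ₁ ^ n) ?_
          · have happ' : ‖(x.1 - z₀) * ((x.1 - c) * d₁) ^ n‖ ≤ M * θ₁ ^ n := happ
            rw [hqx, one_pow, mul_one, ← hv] at happ'
            linarith
          · intro y hy
            rcases hy with hy | hy
            · rw [norm_mul, norm_pow]
              have hyq : ‖(y.1 - c) * d₁‖ ^ n ≤ θ₁ ^ n :=
                pow_le_pow_left₀ (norm_nonneg _) (hq₁ _ (hKD y hy)) n
              exact mul_le_mul (hMb _ (hKD y hy)) hyq (pow_nonneg (norm_nonneg _) n) hM0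
            · rw [(hS1 y hy).1, sub_self, zero_mul, norm_zero]
              positivity
  · intro y hy
    exact ⟨hy.elim (fun h => hKsub h) (fun h => hSU h), fun f hf b hb => hb y hy⟩
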